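/- Let f be a piecewise contracting interval map with contraction rate λ. If x₀ ∈ X̃ is a periodic point of f, then there exists ρ > 0 such that for every x in the open ball B(x₀, ρ), the ω-limit set ω(x) equals the orbit O(x₀). In particular one may take ρ equal to the distance from the orbit of x₀ to Δ. -/
import Mathlib


open Filter Topology Set

/-- A piecewise contracting interval map on `X = [c 0, c N]` with contraction pieces
`X_i` delimited by the points `c 0 < c 1 < … < c N`, contraction rate `lam ∈ (0,1)`,
and `fe i` the (unique) continuous `lam`-Lipschitz extension of `f` restricted to the
`i`-th piece to its closure `[c (i-1), c i]`. The pieces are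
`X_1 = [c 0, c 1)`, `X_i = (c (i-1), c i)` for `1 < i < N`, `X_N = (c (N-1), c N]`. -/
structure PCIM where
  N : ℕ
  hN : 2 ≤ N
  c : ℕ → ℝ
  lam : ℝ
  f : ℝ → ℝ
  fe : ℕ → ℝ → ℝ
  hc : StrictMonoOn c (Set.Iic N)
  hlam : lam ∈ Set.Ioo (0 : ℝ) 1
  hmap : Set.MapsTo f (Set.Icc (c 0) (c N)) (Set.Icc (c 0) (c N))
  hfe_lip : ∀ i, 1 ≤ i → i ≤ N →
    ∀ x ∈ Set.Icc (c (i - 1)) (c i), ∀ y ∈ Set.Icc (c (i - 1)) (c i),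
      |fe i x - fe i y| ≤ lam * |x - y|
  hfe_eq : ∀ i, 1 ≤ i → i ≤ N → ∀ x ∈ Set.Ioo (c (i - 1)) (c i), fe i x = f x
  hfe_left : fe 1 (c 0) = f (c 0)
  hfe_right : fe N (c N) = f (c N)

namespace PCIM

variable (P : PCIM)

/-- The phase space `X = [c 0, c N]`. -/
def X : Set ℝ := Set.Icc (P.c 0) (P.c P.N)

/-- The `i`-th contraction piece (`1 ≤ i ≤ N`). -/
def piece (i : ℕ) : Set ℝ :=
  Set.Ioo (P.c (i - 1)) (P.c i)
    ∪ (if i = 1 then {P.c 0} else (∅ : Set ℝ))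
    ∪ (if i = P.N then {P.c P.N} else (∅ : Set ℝ))

/-- `Δ`, the set of interior boundary points of the pieces. -/
def Δ : Set ℝ := {y | ∃ i, 1 ≤ i ∧ i < P.N ∧ y = P.c i}

/-- `X̃ = ⋂ n, f⁻ⁿ(X \ Δ)`: points whose whole forward orbit stays in `X` and avoids `Δ`. -/
def Xt : Set ℝ := {x | ∀ n : ℕ, P.f^[n] x ∈ P.X \ P.Δ}

/-- Forward orbit of `x`. -/
def orbit (x : ℝ) : Set ℝ := Set.range fun n : ℕ => P.f^[n] x

/-- The ω-limit set of `x`: limits of subsequences of the forward orbit. -/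
def omega (x : ℝ) : Set ℝ :=
  {y | ∃ φ : ℕ → ℕ, StrictMono φ ∧
    Filter.Tendsto (fun n => P.f^[φ n] x) Filter.atTop (nhds y)}

/-- `d_i^- = f_i (c_i)`, the left lateral limit of `f` at `c i`. -/
def dminus (i : ℕ) : ℝ := P.fe i (P.c i)

/-- `d_i^+ = f_{i+1} (c_i)`, the right lateral limit of `f` at `c i`. -/
def dplus (i : ℕ) : ℝ := P.fe (i + 1) (P.c i)

/-- `D⁻ = {d_1^-, …, d_{N-1}^-}`. -/
def Dminus : Set ℝ := {y | ∃ i, 1 ≤ i ∧ i < P.N ∧ y = P.dminus i}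

/-- `D⁺ = {d_1^+, …, d_{N-1}^+}`. -/
def Dplus : Set ℝ := {y | ∃ i, 1 ≤ i ∧ i < P.N ∧ y = P.dplus i}

/-- `D`, the set of all one-sided limits of `f` at endpoints of the pieces. -/
def D : Set ℝ := P.Dminus ∪ P.Dplus ∪ {P.fe 1 (P.c 0), P.fe P.N (P.c P.N)}

/-- `A` is pseudo-invariant: for every `x ∈ A` at least one one-sided limit of `f`
at `x` (i.e. some `fe i x` with `x` in the closure of the `i`-th piece) belongs to `A`. -/
def PseudoInvariant (A : Set ℝ) : Prop :=
  ∀ x ∈ A, ∃ i, 1 ≤ i ∧ i ≤ P.N ∧ x ∈ Set.Icc (P.c (i - 1)) (P.c i) ∧ P.fe i x ∈ A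

/-- `F_i(A) = closure (f (A ∩ X_i))`. -/
def Fmap (i : ℕ) (A : Set ℝ) : Set ℝ := closure (P.f '' (A ∩ P.piece i))

/-- For a word `w = [i_1, …, i_n]`, the set `F_{i_n} ∘ … ∘ F_{i_1} (X)`. -/
def atomOf (w : List ℕ) : Set ℝ := w.foldl (fun S i => P.Fmap i S) P.X

/-- `A` is an atom of generation `n`. -/
def IsAtomGen (n : ℕ) (A : Set ℝ) : Prop :=
  ∃ w : List ℕ, w.length = n ∧ (∀ i ∈ w, 1 ≤ i ∧ i ≤ P.N) ∧
    A = P.atomOf w ∧ A.Nonempty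

/-- `Lam n` is `Λ_{n+1}` of the paper: `Λ_1 = closure (f(X \ Δ))`,
`Λ_{n+1} = closure (f(Λ_n \ Δ))`. -/
def Lam (P : PCIM) : ℕ → Set ℝ
  | 0 => closure (P.f '' (P.X \ P.Δ))
  | n + 1 => closure (P.f '' (P.Lam n \ P.Δ))

/-- The attractor `Λ = ⋂_{n ≥ 1} Λ_n`. -/
def attractor : Set ℝ := ⋂ n : ℕ, P.Lam n

/-- `c i ∈ Δ_lr(x)`: the boundary point `c i` is left-right recurrently visited by the
orbit of `x`. -/
def lrVisited (x : ℝ) (i : ℕ) : Prop :=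
  1 ≤ i ∧ i < P.N ∧
  ∃ l r : ℕ → ℕ, StrictMono l ∧ StrictMono r ∧
    (∀ j, P.f^[l j] x ∈ P.piece i) ∧ (∀ j, P.f^[r j] x ∈ P.piece (i + 1)) ∧
    Filter.Tendsto (fun j => P.f^[l j] x) Filter.atTop (nhds (P.c i)) ∧
    Filter.Tendsto (fun j => P.f^[r j] x) Filter.atTop (nhds (P.c i))

/-- `c i ∈ Δ_lr`: `c i` is left-right recurrently visited by the orbit of some point
of `X̃`. -/
def inΔlr (i : ℕ) : Prop := ∃ x ∈ P.Xt, P.lrVisited x i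

/-- The set `Δ_lr ⊆ Δ`. -/
def ΔlrSet : Set ℝ := {y | ∃ i, P.inΔlr i ∧ y = P.c i}

/-- The relation `∼⁺` on `Δ_lr`: `c_i ∼⁺ c_j` iff `c_i = c_j` or
(`c_i ∈ Δ_lr(d_j^+)` and `c_j ∈ Δ_lr(d_i^+)`). -/
def simP (a b : ℝ) : Prop :=
  a = b ∨ ∃ i j, P.inΔlr i ∧ P.inΔlr j ∧ a = P.c i ∧ b = P.c j ∧
    P.lrVisited (P.dplus j) i ∧ P.lrVisited (P.dplus i) j

/-- The relation `≼⁺` (on representatives): `[c_i] ≼⁺ [c_j]` iff `[c_i] = [c_j]` or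
`c_i ∈ Δ_lr(d_j^+)`. -/
def preP (a b : ℝ) : Prop :=
  P.simP a b ∨ ∃ i j, P.inΔlr i ∧ P.inΔlr j ∧ a = P.c i ∧ b = P.c j ∧
    P.lrVisited (P.dplus j) i

/-- `[c i]` is a minimal class for the partial order `≼⁺`. -/
def MinimalClass (i : ℕ) : Prop :=
  P.inΔlr i ∧ ∀ j, P.inΔlr j → P.preP (P.c j) (P.c i) → P.simP (P.c j) (P.c i)

/-- `f` is injective on each contraction piece. -/
def InjPieces : Prop := ∀ i, 1 ≤ i → i ≤ P.N → Set.InjOn P.f (P.piece i)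

/-- `f` is (strictly) increasing on each contraction piece. -/
def IncrPieces : Prop := ∀ i, 1 ≤ i → i ≤ P.N → StrictMonoOn P.f (P.piece i)

/-- `x` is a periodic point of `f`. -/
def IsPeriodic (x : ℝ) : Prop := ∃ p : ℕ, 1 ≤ p ∧ P.f^[p] x = x

/-- `η` is the itinerary of `x`: `f^[n] x ∈ X_{η n}` for all `n`. -/
def IsItinerary (x : ℝ) (η : ℕ → ℕ) : Prop :=
  ∀ n, 1 ≤ η n ∧ η n ≤ P.N ∧ P.f^[n] x ∈ P.piece (η n)

end PCIM

/-- The word of length `n` of the sequence `η` starting at position `t`. -/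
def wordAt (η : ℕ → ℕ) (t n : ℕ) : List ℕ := (List.range n).map fun m => η (t + m)

/-- The complexity function of the sequence `η`: the number of distinct words of
length `n` occurring in `η`. -/
noncomputable def complexity (η : ℕ → ℕ) (n : ℕ) : ℕ := Set.ncard {w : List ℕ | ∃ t, w = wordAt η t n}

namespace PCIM

variable (P : PCIM)

lemma c_lt_c' {i j : ℕ} (hij : i < j) (hj : j ≤ P.N) : P.c i < P.c j :=
  P.hc (le_trans (le_of_lt hij) hj) hj hij

lemma mem_piece_of_bounds {i : ℕ} (h1 : 1 ≤ i) (hiN : i ≤ P.N) {z : ℝ}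
    (hzX : z ∈ P.X) (hlt : 2 ≤ i → P.c (i - 1) < z) (hgt : i < P.N → z < P.c i) :
    z ∈ P.piece i := by
  have hN2 : 2 ≤ P.N := P.hN
  obtain ⟨hz0, hzN⟩ := hzX
  by_cases hi1 : i = 1
  · subst hi1
    have hlt1 : z < P.c 1 := hgt (by omega)
    rcases eq_or_lt_of_le hz0 with h | h
    · exact Or.inl (Or.inr (by rw [if_pos rfl]; exact h.symm))
    · exact Or.inl (Or.inl ⟨by simpa using h, hlt1⟩)
  · by_cases hiNe : i = P.N
    · subst hiNe
      have hlow : P.c (P.N - 1) < z := hlt (by omega)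
      rcases eq_or_lt_of_le hzN with h | h
      · exact Or.inr (by rw [if_pos rfl]; exact h)
      · exact Or.inl (Or.inl ⟨hlow, h⟩)
    · exact Or.inl (Or.inl ⟨hlt (by omega), hgt (by omega)⟩)

lemma piece_subset_Icc {i : ℕ} (h1 : 1 ≤ i) (hiN : i ≤ P.N) :
    P.piece i ⊆ Set.Icc (P.c (i - 1)) (P.c i) := by
  intro z hz
  rcases hz with (hz | hz) | hz
  · exact Set.Ioo_subset_Icc_self hz
  · split_ifs at hz with h
    · subst h
      rw [Set.mem_singleton_iff] at hz
      subst hz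
      refine ⟨by norm_num, le_of_lt ?_⟩
      exact P.c_lt_c' one_pos (le_trans one_le_two P.hN)
    · exact absurd hz (Set.notMem_empty z)
  · split_ifs at hz with h
    · subst h
      rw [Set.mem_singleton_iff] at hz
      subst hz
      exact ⟨le_of_lt (P.c_lt_c' (Nat.sub_lt (by omega) one_pos) le_rfl), le_rfl⟩
    · exact absurd hz (Set.notMem_empty z)

lemma f_eq_fe {i : ℕ} (h1 : 1 ≤ i) (hiN : i ≤ P.N) {z : ℝ} (hz : z ∈ P.piece i) :
    P.f z = P.fe i z := by
  rcases hz with (hz | hz) | hz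
  · exact (P.hfe_eq i h1 hiN z hz).symm
  · split_ifs at hz with h
    · subst h
      rw [Set.mem_singleton_iff] at hz
      subst hz
      exact P.hfe_left.symm
    · exact absurd hz (Set.notMem_empty z)
  · split_ifs at hz with h
    · subst h
      rw [Set.mem_singleton_iff] at hz
      subst hz
      exact P.hfe_right.symm
    · exact absurd hz (Set.notMem_empty z)

lemma contract_piece {i : ℕ} (h1 : 1 ≤ i) (hiN : i ≤ P.N) {a b : ℝ}
    (ha : a ∈ P.piece i) (hb : b ∈ P.piece i) :
    |P.f a - P.f b| ≤ P.lam * |a - b| := by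
  rw [P.f_eq_fe h1 hiN ha, P.f_eq_fe h1 hiN hb]
  exact P.hfe_lip i h1 hiN a (P.piece_subset_Icc h1 hiN ha) b (P.piece_subset_Icc h1 hiN hb)

lemma same_piece {a b : ℝ} (ha : a ∈ P.X \ P.Δ) (hb : b ∈ P.X)
    (hclose : ∀ q ∈ P.Δ, |a - b| < |a - q|) :
    ∃ i, 1 ≤ i ∧ i ≤ P.N ∧ a ∈ P.piece i ∧ b ∈ P.piece i := by
  have hN2 : 2 ≤ P.N := P.hN
  have hex : ∃ i, 1 ≤ i ∧ a ≤ P.c i := ⟨P.N, by omega, ha.1.2⟩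
  set i := Nat.find hex with hidef
  obtain ⟨h1, hle⟩ : 1 ≤ i ∧ a ≤ P.c i := Nat.find_spec hex
  have hiN : i ≤ P.N := Nat.find_min' hex ⟨by omega, ha.1.2⟩
  have hnotΔ : ∀ j, 1 ≤ j → j < P.N → a ≠ P.c j := fun j hj1 hjN h => ha.2 ⟨j, hj1, hjN, h⟩
  have hlt_a : 2 ≤ i → P.c (i - 1) < a := by
    intro h2
    by_contra h
    push_neg at h
    exact Nat.find_min hex (Nat.sub_lt (by omega) one_pos) ⟨by omega, h⟩
  have hgt_a : i < P.N → a < P.c i := fun hiN' =>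
    lt_of_le_of_ne hle (hnotΔ i h1 hiN')
  have hlt_b : 2 ≤ i → P.c (i - 1) < b := by
    intro h2
    have hq : P.c (i - 1) ∈ P.Δ := ⟨i - 1, by omega, by omega, rfl⟩
    have h1' := hclose _ hq
    have hca := hlt_a h2
    have habs : |a - P.c (i - 1)| = a - P.c (i - 1) := abs_of_pos (by linarith)
    rw [habs] at h1'
    have := le_abs_self (a - b)
    linarith
  have hgt_b : i < P.N → b < P.c i := by
    intro hiN'
    have hq : P.c i ∈ P.Δ := ⟨i, h1, hiN', rfl⟩
    have h1' := hclose _ hq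
    have hca := hgt_a hiN'
    have habs : |a - P.c i| = P.c i - a := by
      rw [abs_of_neg (by linarith : a - P.c i < 0)]; ring
    rw [habs] at h1'
    have h2' : b - a ≤ |a - b| := by
      rw [abs_sub_comm]; exact le_abs_self _
    linarith
  exact ⟨i, h1, hiN,
    P.mem_piece_of_bounds h1 hiN ha.1 hlt_a hgt_a,
    P.mem_piece_of_bounds h1 hiN hb hlt_b hgt_b⟩

end PCIM

/-- If `x₀ ∈ X̃` is periodic, then for `ρ` equal to the distance between the orbit of
`x₀` and `Δ`, `ρ > 0` and every `x` in the ball `B(x₀, ρ)` (within the phase space)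
satisfies `ω(x) = O(x₀)`. -/
theorem stmt2 (P : PCIM) (x₀ : ℝ) (hx₀ : x₀ ∈ P.Xt) (hper : P.IsPeriodic x₀) :
    ∃ ρ > (0 : ℝ), ρ = sInf {d : ℝ | ∃ p ∈ P.orbit x₀, ∃ q ∈ P.Δ, d = dist p q} ∧
      ∀ x ∈ Metric.ball x₀ ρ ∩ P.X, P.omega x = P.orbit x₀ := by
  classical
  obtain ⟨p, hp1, hpp⟩ := hper
  have hN2 : 2 ≤ P.N := P.hN
  have hlam0 : (0 : ℝ) < P.lam := P.hlam.1
  have hlam1 : P.lam < 1 := P.hlam.2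
  -- iterate mod period
  have hmul : ∀ m, P.f^[p * m] x₀ = x₀ := by
    intro m
    induction m with
    | zero => simp
    | succ k ih => rw [Nat.mul_succ, Function.iterate_add_apply, hpp, ih]
  have hiter_mod : ∀ n, P.f^[n] x₀ = P.f^[n % p] x₀ := by
    intro n
    conv_lhs => rw [← Nat.mod_add_div n p]
    rw [Function.iterate_add_apply, hmul]
  -- orbit is finite
  have horbfin : (P.orbit x₀).Finite := by
    apply Set.Finite.subset ((Set.finite_Iio p).image fun k => P.f^[k] x₀)
    rintro _ ⟨n, rfl⟩
    exact ⟨n % p, Nat.mod_lt n (by omega), (hiter_mod n).symm⟩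
  set S := {d : ℝ | ∃ q ∈ P.orbit x₀, ∃ r ∈ P.Δ, d = dist q r} with hSdef
  have hSfin : S.Finite := by
    apply Set.Finite.subset (((Set.finite_Iio p).prod (Set.finite_Iio P.N)).image
      fun ki : ℕ × ℕ => dist (P.f^[ki.1] x₀) (P.c ki.2))
    rintro d ⟨q, ⟨n, rfl⟩, r, ⟨i, hi1, hiN, rfl⟩, rfl⟩
    exact ⟨(n % p, i), ⟨Nat.mod_lt n (by omega), hiN⟩, by simp [← hiter_mod n]⟩
  have hSne : S.Nonempty := by
    refine ⟨dist x₀ (P.c 1), x₀, ⟨0, by simp⟩, P.c 1, ⟨1, le_refl 1, by omega, rfl⟩, rfl⟩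
  have hSlb : ∀ d ∈ S, (0 : ℝ) ≤ d := by
    rintro d ⟨q, _, r, _, rfl⟩
    exact dist_nonneg
  set ρ := sInf S with hρdef
  have hρmem : ρ ∈ S := hSne.csInf_mem hSfin
  have hρpos : 0 < ρ := by
    obtain ⟨q, ⟨k, rfl⟩, r, hr, heq⟩ := hρmem
    have hne : P.f^[k] x₀ ≠ r := fun h => (hx₀ k).2 (h ▸ hr)
    rw [heq]
    exact dist_pos.mpr hne
  have hlb : ∀ a ∈ P.orbit x₀, ∀ q ∈ P.Δ, ρ ≤ dist a q := fun a ha q hq =>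
    csInf_le ⟨0, hSlb⟩ ⟨a, ha, q, hq, rfl⟩
  refine ⟨ρ, hρpos, rfl, ?_⟩
  rintro x ⟨hxball, hxX⟩
  have hxd : |x₀ - x| < ρ := by
    rw [← Real.dist_eq, dist_comm]
    exact Metric.mem_ball.mp hxball
  have hC0 : (0 : ℝ) ≤ |x₀ - x| := abs_nonneg _
  -- synchronization
  have hsync : ∀ n, P.f^[n] x ∈ P.X ∧ |P.f^[n] x₀ - P.f^[n] x| ≤ P.lam ^ n * |x₀ - x| := by
    intro n
    induction n with
    | zero => exact ⟨hxX, by simp⟩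
    | succ n ih =>
      have haXΔ : P.f^[n] x₀ ∈ P.X \ P.Δ := hx₀ n
      have haorb : P.f^[n] x₀ ∈ P.orbit x₀ := ⟨n, rfl⟩
      have hpow1 : P.lam ^ n ≤ 1 := pow_le_one₀ hlam0.le hlam1.le
      have hab : |P.f^[n] x₀ - P.f^[n] x| < ρ := by
        calc |P.f^[n] x₀ - P.f^[n] x| ≤ P.lam ^ n * |x₀ - x| := ih.2
          _ ≤ 1 * |x₀ - x| := mul_le_mul_of_nonneg_right hpow1 hC0
          _ = |x₀ - x| := one_mul _
          _ < ρ := hxd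
      obtain ⟨i, h1, hiN, hai, hbi⟩ := P.same_piece haXΔ ih.1 (fun q hq => by
        calc |P.f^[n] x₀ - P.f^[n] x| < ρ := hab
          _ ≤ dist (P.f^[n] x₀) q := hlb _ haorb q hq
          _ = |P.f^[n] x₀ - q| := Real.dist_eq _ _)
      constructor
      · rw [Function.iterate_succ_apply']
        exact P.hmap ih.1
      · rw [Function.iterate_succ_apply', Function.iterate_succ_apply']
        calc |P.f (P.f^[n] x₀) - P.f (P.f^[n] x)|
            ≤ P.lam * |P.f^[n] x₀ - P.f^[n] x| := P.contract_piece h1 hiN hai hbi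
          _ ≤ P.lam * (P.lam ^ n * |x₀ - x|) := mul_le_mul_of_nonneg_left ih.2 hlam0.le
          _ = P.lam ^ (n + 1) * |x₀ - x| := by ring
  have htendC : Filter.Tendsto (fun n : ℕ => P.lam ^ n * |x₀ - x|) Filter.atTop (nhds 0) := by
    simpa using (tendsto_pow_atTop_nhds_zero_of_lt_one hlam0.le hlam1).mul_const |x₀ - x|
  ext y
  constructor
  · rintro ⟨φ, hφ, hten⟩
    have hφn : ∀ n, n ≤ φ n := fun n => hφ.le_apply
    have hbound : ∀ n, ‖P.f^[φ n] x₀ - P.f^[φ n] x‖ ≤ P.lam ^ n * |x₀ - x| := by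
      intro n
      calc ‖P.f^[φ n] x₀ - P.f^[φ n] x‖ ≤ P.lam ^ (φ n) * |x₀ - x| := (hsync (φ n)).2
        _ ≤ P.lam ^ n * |x₀ - x| :=
          mul_le_mul_of_nonneg_right (pow_le_pow_of_le_one hlam0.le hlam1.le (hφn n)) hC0
    have hdiff : Filter.Tendsto (fun n => P.f^[φ n] x₀ - P.f^[φ n] x)
        Filter.atTop (nhds 0) := squeeze_zero_norm hbound htendC
    have hten0 : Filter.Tendsto (fun n => P.f^[φ n] x₀) Filter.atTop (nhds y) := by
      have := hdiff.add hten
      simpa using this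
    exact horbfin.isClosed.mem_of_tendsto hten0
      (Filter.Eventually.of_forall fun n => ⟨φ n, rfl⟩)
  · rintro ⟨k, rfl⟩
    refine ⟨fun n => k + n * p, ?_, ?_⟩
    · apply strictMono_nat_of_lt_succ
      intro n
      have h : (n + 1) * p = n * p + p := Nat.succ_mul n p
      omega
    · have hφeq : ∀ n : ℕ, P.f^[k + n * p] x₀ = P.f^[k] x₀ := by
        intro n
        rw [Function.iterate_add_apply, mul_comm, hmul]
      have hbound : ∀ n : ℕ, ‖P.f^[k + n * p] x - P.f^[k] x₀‖ ≤ P.lam ^ n * |x₀ - x| := by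
        intro n
        rw [← hφeq n, norm_sub_rev]
        calc ‖P.f^[k + n * p] x₀ - P.f^[k + n * p] x‖
            ≤ P.lam ^ (k + n * p) * |x₀ - x| := (hsync (k + n * p)).2
          _ ≤ P.lam ^ n * |x₀ - x| := by
            apply mul_le_mul_of_nonneg_right _ hC0
            apply pow_le_pow_of_le_one hlam0.le hlam1.le
            calc n ≤ n * p := Nat.le_mul_of_pos_right n (by omega)
              _ ≤ k + n * p := Nat.le_add_left _ _
      have hdiff : Filter.Tendsto (fun n : ℕ => P.f^[k + n * p] x - P.f^[k] x₀)
          Filter.atTop (nhds 0) := squeeze_zero_norm hbound htendC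
      have := hdiff.add (tendsto_const_nhds (x := P.f^[k] x₀) (f := Filter.atTop))
      simpa using this
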